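/- Let q = p^r with p prime, 1 < s < q, and a ∈ 𝔽_q. Fix j ≥ 2 and 1 ≤ n ≤ q^{j-1}+1, and for m ≥ n define d_{j,m,n} = (-1)^{(j+m-n)(s-1)} · C([s^{j+m-n}]_q, c_{j,m,n}) · (-a)^{c_{j,m,n}} · (-1)^{n-1} ∈ 𝔽_q, where c_{j,m,n} = b_{j,m,n} - [s̄^{j+m-n}]_q with s̄ = q - s. Then d_{j,m+1,n} = (-1)^{s-1} (-a)^s · d_{j,m,n} for all m ≥ n, and consequently the sequence (d_{j,m,n})_{m ≥ n} is periodic. -/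

import Mathlib

/-!
Write `S k = ∑_{i<k} q^i`, so that `[s^k]_q = s * S k`. Unwinding the recursions gives the
closed form `c_{j,m,n} + S j = n + s * S (j+m-n)`, hence `c_{j,m+1,n} = c_{j,m,n} + s q^{j+m-n}`
with `0 < c_{j,m,n} < q^{j+m-n}`. Since `s * S (k+1) = s q^k + s * S k` and both `s * S k` and
`c` are below `q^k`, Lucas's theorem strips the leading digit `s` from both arguments of the
binomial coefficient, while `x^{q^k} = x` in `𝔽_q` turns `(-a)^{s q^k}` into `(-a)^s`. So
`d_{j,m,n}` is multiplied by `α = (-1)^{s-1} (-a)^s` at each step, and `α^{q-1} = 1` unless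
`a = 0`, in which case every `d_{j,m,n}` vanishes because `c_{j,m,n} > 0`.
-/

open Finset

/-- `[1^m 0^j]_q = ∑_{i<m} q^{j+i}`. -/
def onesZeros (q j m : ℕ) : ℕ := ∑ i ∈ Finset.range m, q ^ (j + i)

/-- `bSeq q j m t` is `b_{j,m,t+1}`, defined by `b_{j,m,1} = [1^m 0^j]_q`
and `b_{j,m,n+1} = b_{j,m,n} - (q^{j+m-n} - 1)`. -/
def bSeq (q j m : ℕ) : ℕ → ℕ
  | 0 => onesZeros q j m
  | t + 1 => bSeq q j m t - (q ^ (j + m - t - 1) - 1)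

/-- `c_{j,m,n} = b_{j,m,n} - [s̄^{j+m-n}]_q` with `s̄ = q - s`. -/
def cSeq (q j s m n : ℕ) : ℕ :=
  bSeq q j m (n - 1) - (q - s) * (q ^ (j + m - n) - 1) / (q - 1)

/-- `d_{j,m,n} = (-1)^{(j+m-n)(s-1)} C([s^{j+m-n}]_q, c_{j,m,n}) (-a)^{c_{j,m,n}} (-1)^{n-1} ∈ F`. -/
noncomputable def dSeq (F : Type) [Field F] (q j s : ℕ) (a : F) (m n : ℕ) : F :=
  (-1 : F) ^ ((j + m - n) * (s - 1)) *
    (Nat.choose (s * (q ^ (j + m - n) - 1) / (q - 1)) (cSeq q j s m n) : F) *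
    (-a) ^ (cSeq q j s m n) * (-1 : F) ^ (n - 1)

lemma geomSum_mul_sub_one_add_one {q : ℕ} (hq : 1 ≤ q) (k : ℕ) :
    (∑ i ∈ range k, q ^ i) * (q - 1) + 1 = q ^ k := by
  simpa [Nat.sub_add_cancel hq] using geom_sum_mul_add (q - 1) k

lemma mul_geomSum_lt_pow {q s : ℕ} (hs : s < q) (k : ℕ) :
    s * ∑ i ∈ range k, q ^ i < q ^ k := by
  have hgeom := geomSum_mul_sub_one_add_one (q := q) (by omega) k
  have hle : s * ∑ i ∈ range k, q ^ i ≤ (∑ i ∈ range k, q ^ i) * (q - 1) := by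
    rw [mul_comm]
    exact Nat.mul_le_mul_left _ (by omega)
  omega

lemma mul_pow_sub_one_div_sub_one {q : ℕ} (hq : 2 ≤ q) (t k : ℕ) :
    t * (q ^ k - 1) / (q - 1) = t * ∑ i ∈ range k, q ^ i := by
  rw [Nat.mul_div_assoc t (Nat.sub_one_dvd_pow_sub_one q k), Nat.geomSum_eq hq]

lemma pow_pred_add_one_le_geomSum (q : ℕ) {j : ℕ} (hj : 2 ≤ j) :
    q ^ (j - 1) + 1 ≤ ∑ i ∈ range j, q ^ i := by
  obtain ⟨i, rfl⟩ : ∃ i, j = i + 2 := ⟨j - 2, by omega⟩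
  rw [geom_sum_succ', sum_range_succ']
  simp

theorem Choose.choose_mul_pow_add_modEq {p : ℕ} [Fact p.Prime] (A C : ℕ) {e B D : ℕ}
    (hB : B < p ^ e) (hD : D < p ^ e) :
    Nat.choose (A * p ^ e + B) (C * p ^ e + D) ≡ Nat.choose A C * Nat.choose B D [MOD p] := by
  induction e generalizing B D with
  | zero =>
    simp_all only [pow_zero, Nat.lt_one_iff, mul_one, add_zero, Nat.choose_self]
    rfl
  | succ e ih =>
    have hp : 0 < p := (Fact.out : p.Prime).pos
    have hsplit (X Y : ℕ) : X * p ^ (e + 1) + Y = Y + p * (X * p ^ e) := by ring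
    have hdiv {Y : ℕ} (hY : Y < p ^ (e + 1)) : Y / p < p ^ e :=
      Nat.div_lt_of_lt_mul (by rwa [← _root_.pow_succ'])
    calc Nat.choose (A * p ^ (e + 1) + B) (C * p ^ (e + 1) + D)
        ≡ Nat.choose (B % p) (D % p) *
            Nat.choose (A * p ^ e + B / p) (C * p ^ e + D / p) [MOD p] := by
          have key := Choose.choose_modEq_choose_mod_mul_choose_div_nat
            (n := B + p * (A * p ^ e)) (k := D + p * (C * p ^ e)) (p := p)
          rw [hsplit, hsplit]
          rwa [Nat.add_mul_mod_self_left, Nat.add_mul_mod_self_left,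
            Nat.add_mul_div_left _ _ hp, Nat.add_mul_div_left _ _ hp, add_comm (B / p),
            add_comm (D / p)] at key
      _ ≡ Nat.choose (B % p) (D % p) * (Nat.choose A C * Nat.choose (B / p) (D / p)) [MOD p] :=
          .mul_left _ (ih (hdiv hB) (hdiv hD))
      _ = Nat.choose A C * (Nat.choose (B % p) (D % p) * Nat.choose (B / p) (D / p)) := by ring
      _ ≡ Nat.choose A C * Nat.choose B D [MOD p] :=
          .mul_left _ Choose.choose_modEq_choose_mod_mul_choose_div_nat.symm

lemma choose_mul_geomSum_succ_modEq {p r q s k c : ℕ} [Fact p.Prime] (hq : q = p ^ r)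
    (hs : s < q) (hc : c < q ^ k) :
    Nat.choose (s * ∑ i ∈ range (k + 1), q ^ i) (c + s * q ^ k) ≡
      Nat.choose (s * ∑ i ∈ range k, q ^ i) c [MOD p] := by
  have hqk : q ^ k = p ^ (r * k) := by rw [hq, pow_mul]
  have hlucas := Choose.choose_mul_pow_add_modEq s s
    (hqk ▸ mul_geomSum_lt_pow hs k) (hqk ▸ hc)
  rw [Nat.choose_self, one_mul, ← hqk] at hlucas
  rwa [geom_sum_succ', mul_add, add_comm c]

lemma bSeq_eq {q : ℕ} (hq : 1 ≤ q) (j m : ℕ) {t : ℕ} (ht : t ≤ m) :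
    bSeq q j m t = ∑ i ∈ range (m - t), q ^ (j + i) + t := by
  induction t with
  | zero => simp [bSeq, onesZeros]
  | succ t ih =>
    rw [bSeq, ih (by omega), show m - t = m - (t + 1) + 1 by omega, sum_range_succ,
      show j + (m - (t + 1)) = j + m - t - 1 by omega]
    have hpos := Nat.one_le_pow (j + m - t - 1) q hq
    omega

section cSeq

variable {q j s m n : ℕ}

lemma cSeq_add_geomSum (hq : 2 ≤ q) (hs : 1 ≤ s) (hsq : s ≤ q) (hn : 1 ≤ n)
    (hnm : n ≤ m) :
    cSeq q j s m n + ∑ i ∈ range j, q ^ i = n + s * ∑ i ∈ range (j + m - n), q ^ i := by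
  unfold cSeq
  rw [mul_pow_sub_one_div_sub_one hq, bSeq_eq (by omega) j m (by omega : n - 1 ≤ m)]
  set S := ∑ i ∈ range (j + m - n), q ^ i
  have hb : ∑ i ∈ range j, q ^ i + ∑ i ∈ range (m - (n - 1)), q ^ (j + i) = q * S + 1 := by
    rw [← sum_range_add, show j + (m - (n - 1)) = j + m - n + 1 by omega, geom_sum_succ]
  have hjS : ∑ i ∈ range j, q ^ i ≤ S :=
    sum_le_sum_of_subset (range_subset_range.2 (by omega))
  have hS : S ≤ s * S := Nat.le_mul_of_pos_left S hs
  have hsub : (q - s) * S = q * S - s * S := Nat.sub_mul q s S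
  have hsS : s * S ≤ q * S := Nat.mul_le_mul_right S hsq
  omega

lemma cSeq_succ (hq : 2 ≤ q) (hs : 1 ≤ s) (hsq : s ≤ q) (hn : 1 ≤ n) (hnm : n ≤ m) :
    cSeq q j s (m + 1) n = cSeq q j s m n + s * q ^ (j + m - n) := by
  have hm := cSeq_add_geomSum (j := j) hq hs hsq hn hnm
  have hm1 := cSeq_add_geomSum (j := j) hq hs hsq hn (by omega : n ≤ m + 1)
  rw [show j + (m + 1) - n = j + m - n + 1 by omega, geom_sum_succ', mul_add] at hm1
  omega

lemma cSeq_lt_pow (hq : 2 ≤ q) (hs : 1 ≤ s) (hsq : s < q) (hj : 2 ≤ j) (hn : 1 ≤ n)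
    (hnq : n ≤ q ^ (j - 1) + 1) (hnm : n ≤ m) :
    cSeq q j s m n < q ^ (j + m - n) := by
  have hclosed := cSeq_add_geomSum (j := j) hq hs hsq.le hn hnm
  have hsS := mul_geomSum_lt_pow hsq (j + m - n)
  have hnS := pow_pred_add_one_le_geomSum q hj
  omega

lemma cSeq_pos (hq : 2 ≤ q) (hs : 2 ≤ s) (hsq : s ≤ q) (hn : 1 ≤ n) (hnm : n ≤ m) :
    0 < cSeq q j s m n := by
  have hclosed := cSeq_add_geomSum (j := j) hq (by omega) hsq hn hnm
  have hjS : ∑ i ∈ range j, q ^ i ≤ ∑ i ∈ range (j + m - n), q ^ i :=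
    sum_le_sum_of_subset (range_subset_range.2 (by omega))
  have hsS := Nat.mul_le_mul_right (∑ i ∈ range (j + m - n), q ^ i) hs
  omega

end cSeq

section dSeq

variable {F : Type} [Field F] {q j s m n : ℕ}

lemma dSeq_succ [Fintype F] {p r : ℕ} [Fact p.Prime] (hq : q = p ^ r)
    (hcard : Fintype.card F = q) (hs : 1 < s) (hsq : s < q) (a : F) (hj : 2 ≤ j) (hn : 1 ≤ n)
    (hnq : n ≤ q ^ (j - 1) + 1) (hnm : n ≤ m) :
    dSeq F q j s a (m + 1) n = (-1) ^ (s - 1) * (-a) ^ s * dSeq F q j s a m n := by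
  have : CharP F p := charP_of_card_eq_prime_pow (hcard.trans hq)
  have hq2 : 2 ≤ q := by omega
  set k := j + m - n
  set c := cSeq q j s m n
  have hchoose : (Nat.choose (s * (q ^ (k + 1) - 1) / (q - 1)) (c + s * q ^ k) : F) =
      Nat.choose (s * (q ^ k - 1) / (q - 1)) c := by
    rw [mul_pow_sub_one_div_sub_one hq2, mul_pow_sub_one_div_sub_one hq2]
    exact (CharP.natCast_eq_natCast F p).2 <| choose_mul_geomSum_succ_modEq hq hsq <|
      cSeq_lt_pow hq2 hs.le hsq hj hn hnq hnm
  have hfrob : (-a) ^ (c + s * q ^ k) = (-a) ^ c * (-a) ^ s := by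
    rw [pow_add, pow_mul, ← hcard, FiniteField.pow_card_pow]
  unfold dSeq
  rw [show j + (m + 1) - n = k + 1 by omega, cSeq_succ hq2 hs.le hsq.le hn hnm, hchoose, hfrob,
    add_one_mul, pow_add]
  ring

lemma dSeq_zero (hq : 2 ≤ q) (hs : 2 ≤ s) (hsq : s ≤ q) (hn : 1 ≤ n) (hnm : n ≤ m) :
    dSeq F q j s 0 m n = 0 := by
  unfold dSeq
  rw [neg_zero, zero_pow (cSeq_pos hq hs hsq hn hnm).ne', mul_zero, zero_mul]

end dSeq

lemma apply_add_eq_pow_mul {M : Type*} [Monoid M] {f : ℕ → M} {α : M} {n : ℕ}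
    (h : ∀ m ≥ n, f (m + 1) = α * f m) (T : ℕ) {m : ℕ} (hm : n ≤ m) :
    f (m + T) = α ^ T * f m := by
  induction T with
  | zero => simp
  | succ T ih => rw [← add_assoc, h _ (by omega), ih, pow_succ', mul_assoc]

theorem stmt16_general (F : Type) [Field F] [Fintype F] (p r q : ℕ) (hp : p.Prime)
    (hq : q = p ^ r) (hcard : Fintype.card F = q)
    (s : ℕ) (hs1 : 1 < s) (hsq : s < q) (a : F) (j n : ℕ) (hj : 2 ≤ j)
    (hn1 : 1 ≤ n) (hn2 : n ≤ q ^ (j - 1) + 1) :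
    (∀ m ≥ n, dSeq F q j s a (m + 1) n = (-1 : F) ^ (s - 1) * (-a) ^ s * dSeq F q j s a m n) ∧
      ∃ T, 1 ≤ T ∧ ∀ m ≥ n, dSeq F q j s a (m + T) n = dSeq F q j s a m n := by
  have : Fact p.Prime := ⟨hp⟩
  have hstep := fun m (hm : m ≥ n) => dSeq_succ hq hcard hs1 hsq a hj hn1 hn2 hm
  refine ⟨hstep, q - 1, by omega, fun m hm => ?_⟩
  rw [apply_add_eq_pow_mul (f := fun m => dSeq F q j s a m n) hstep (q - 1) hm]
  by_cases ha : a = 0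
  · subst ha
    rw [dSeq_zero (by omega) hs1 hsq.le hn1 hm, mul_zero]
  · rw [← hcard, FiniteField.pow_card_sub_one_eq_one _ (by simp [ha]), one_mul]

/-- over `F = 𝔽_q`, `q = p^r`, `1 < s < q`, `a ∈ F`, `j ≥ 2`,
`1 ≤ n ≤ q^{j-1}+1`: for all `m ≥ n`, `d_{j,m+1,n} = (-1)^{s-1}(-a)^s d_{j,m,n}`,
and consequently `(d_{j,m,n})_{m ≥ n}` is periodic. -/
theorem stmt16 (F : Type) [Field F] [Fintype F] (p r q : ℕ) (hp : p.Prime)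
    (hr : 1 ≤ r) (hq : q = p ^ r) (hcard : Fintype.card F = q)
    (s : ℕ) (hs1 : 1 < s) (hsq : s < q) (a : F) (j n : ℕ) (hj : 2 ≤ j)
    (hn1 : 1 ≤ n) (hn2 : n ≤ q ^ (j - 1) + 1) :
    (∀ m ≥ n, dSeq F q j s a (m + 1) n = (-1 : F) ^ (s - 1) * (-a) ^ s * dSeq F q j s a m n) ∧
      ∃ T, 1 ≤ T ∧ ∀ m ≥ n, dSeq F q j s a (m + T) n = dSeq F q j s a m n :=
  stmt16_general F p r q hp hq hcard s hs1 hsq a j n hj hn1 hn2
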